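/- arXiv:2304.03564 — 2 statements merged into one kernel-verified Lean document; each statement's English description precedes it below -/
import Mathlib

section
/- Let R be a ring with identity and a nontrivial idempotent e, let g : R → R satisfy Assumption A, and let d : R → R be a multiplicative skew semi-derivation with associated map g and automorphism α. Then d is additive on the off-diagonal Peirce components: (i) d(a₁₂ + b₁₂) = d(a₁₂) + d(b₁₂) for all a₁₂, b₁₂ ∈ R₁₂; (ii) d(a₂₁ + b₂₁) = d(a₂₁) + d(b₂₁) for all a₂₁, b₂₁ ∈ R₂₁. -/
/-- `pel e 0 = e₁ = e`, `pel e 1 = e₂ = 1 - e`. -/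
def pel {R : Type*} [Ring R] (e : R) : Fin 2 → R := fun i => if i = 0 then e else 1 - e

/-- The Peirce component `R_ij = e_i R e_j`. -/
def peirceSet {R : Type*} [Ring R] (e : R) (i j : Fin 2) : Set R :=
  {x | ∃ r : R, x = pel e i * r * pel e j}

/-- A multiplicative skew semi-derivation `d` with associated map `g` and automorphism `α`. -/
def IsMultSkewSemiDeriv {R : Type*} [Ring R] (d g : R → R) (α : R ≃+* R) : Prop :=
  (∀ x y : R, d (x * y) = d x * g y + α x * d y) ∧
  (∀ x y : R, d (x * y) = d x * α y + g x * d y) ∧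
  (∀ x : R, d (g x) = g (d x))

/-- A multiplicative generalized skew semi-derivation `f` with associated map `g`,
multiplicative skew semi-derivation `d` and automorphism `α`. -/
def IsMultGenSkewSemiDeriv {R : Type*} [Ring R] (f d g : R → R) (α : R ≃+* R) : Prop :=
  (∀ x y : R, f (x * y) = f x * g y + α x * d y) ∧
  (∀ x y : R, f (x * y) = d x * α y + g x * f y) ∧
  (∀ x : R, f (g x) = g (f x))

/-- Assumption A on the map `g`. -/
def AssumptionA {R : Type*} [Ring R] (e : R) (g : R → R) : Prop :=
  g 0 = 0 ∧
  (∀ i j k : Fin 2, i ≤ j →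
    ∀ a ∈ peirceSet e k 0, ∀ b ∈ peirceSet e k 1,
      (∀ x ∈ peirceSet e i j, (a + b) * g x = 0) →
      (i = 0 → a = 0) ∧ (i = 1 → b = 0)) ∧
  (∀ i j : Fin 2,
    ∀ a ∈ peirceSet e 0 j, ∀ b ∈ peirceSet e 1 j,
      (∀ x ∈ peirceSet e i i, g x * (a + b) = 0) →
      (i = 0 → a = 0) ∧ (i = 1 → b = 0)) ∧
  (∀ a ∈ peirceSet e 0 0, ∀ b ∈ peirceSet e 0 1, g (a + b) = g a + g b) ∧
  (∀ a ∈ peirceSet e 0 0, ∀ b ∈ peirceSet e 1 0, g (a + b) = g a + g b)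

/-- Assumption B on the map `g`. -/
def AssumptionB {R : Type*} [Ring R] (e : R) (g : R → R) : Prop :=
  g 0 = 0 ∧
  (∀ i j : Fin 2,
    ∀ a ∈ peirceSet e j 0, ∀ b ∈ peirceSet e j 1,
      (∀ x ∈ peirceSet e i i, (a + b) * g x = 0) → a + b = 0) ∧
  (∀ i : Fin 2,
    ∀ a ∈ peirceSet e 0 0, ∀ c ∈ peirceSet e 1 0,
      (∀ x ∈ peirceSet e i i, g x * (a + c) = 0) → a + c = 0)

section helpers
variable {R : Type*} [Ring R] {e : R}

lemma pel_sum : pel e 0 + pel e 1 = (1:R) := by simp [pel]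

lemma pel_same (he : e * e = e) (i : Fin 2) : pel e i * pel e i = pel e i := by
  fin_cases i
  · simpa [pel] using he
  · show (1-e)*(1-e) = 1-e
    rw [mul_sub, mul_one, sub_mul, one_mul, he, sub_self, sub_zero]

lemma pel_orth (he : e * e = e) {i j : Fin 2} (h : i ≠ j) : pel e i * pel e j = (0:R) := by
  fin_cases i <;> fin_cases j <;> simp_all [pel]
  · rw [mul_sub, mul_one, he, sub_self]
  · rw [sub_mul, one_mul, he, sub_self]

lemma pel_mem (he : e * e = e) (i : Fin 2) : pel e i ∈ peirceSet e i i :=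
  ⟨1, by rw [mul_one, pel_same he]⟩

lemma mem_left (he : e * e = e) {i j : Fin 2} {x : R} (hx : x ∈ peirceSet e i j) :
    pel e i * x = x := by
  obtain ⟨r, rfl⟩ := hx
  rw [← mul_assoc, ← mul_assoc, pel_same he]

lemma mem_right (he : e * e = e) {i j : Fin 2} {x : R} (hx : x ∈ peirceSet e i j) :
    x * pel e j = x := by
  obtain ⟨r, rfl⟩ := hx
  rw [mul_assoc, pel_same he]

lemma mem_mul_zero (he : e * e = e) {i j k l : Fin 2} (hjk : j ≠ k) {x y : R}
    (hx : x ∈ peirceSet e i j) (hy : y ∈ peirceSet e k l) : x * y = 0 := by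
  calc x * y = (x * pel e j) * (pel e k * y) := by rw [mem_right he hx, mem_left he hy]
    _ = x * ((pel e j * pel e k) * y) := by rw [mul_assoc, ← mul_assoc (pel e j)]
    _ = 0 := by rw [pel_orth he hjk, zero_mul, mul_zero]

variable {g d : R → R} {α : R ≃+* R}

lemma d_zero (hg0 : g 0 = 0) (hd : IsMultSkewSemiDeriv d g α) : d 0 = 0 := by
  simpa [hg0] using hd.1 0 0

/-- Additivity of `d` on `R_{k0} + R_{k1}` (row lemma). -/
lemma row_add (he : e * e = e) (hg : AssumptionA e g) (hd : IsMultSkewSemiDeriv d g α)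
    {k : Fin 2} {a b : R} (ha : a ∈ peirceSet e k 0) (hb : b ∈ peirceSet e k 1) :
    d (a + b) = d a + d b := by
  obtain ⟨hg0, hA1, _, _, _⟩ := hg
  have d0 : d 0 = 0 := d_zero hg0 hd
  set t := d (a + b) - d a - d b with ht
  have key : ∀ i j : Fin 2, ∀ x ∈ peirceSet e i j, t * g x = 0 := by
    intro i j x hx
    fin_cases i
    · -- i = 0 : b * x = 0
      have hbx : b * x = 0 := mem_mul_zero he (by decide) hb hx
      have habx : (a + b) * x = a * x := by rw [add_mul, hbx, add_zero]
      have h1 := hd.1 (a + b) x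
      rw [habx, hd.1 a x, map_add] at h1
      have h3 := hd.1 b x
      rw [hbx, d0] at h3
      calc (d (a+b) - d a - d b) * g x
          = (d (a+b) * g x + (α a + α b) * d x) - (d a * g x + α a * d x)
            - (d b * g x + α b * d x) := by noncomm_ring
        _ = (d a * g x + α a * d x) - (d a * g x + α a * d x) - 0 := by rw [← h1, ← h3]
        _ = 0 := by abel
    · -- i = 1 : a * x = 0
      have hax : a * x = 0 := mem_mul_zero he (by decide) ha hx
      have habx : (a + b) * x = b * x := by rw [add_mul, hax, zero_add]
      have h1 := hd.1 (a + b) x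
      rw [habx, hd.1 b x, map_add] at h1
      have h3 := hd.1 a x
      rw [hax, d0] at h3
      calc (d (a+b) - d a - d b) * g x
          = (d (a+b) * g x + (α a + α b) * d x) - (d a * g x + α a * d x)
            - (d b * g x + α b * d x) := by noncomm_ring
        _ = (d b * g x + α b * d x) - 0 - (d b * g x + α b * d x) := by rw [← h1, ← h3]
        _ = 0 := by abel
  have hrow : ∀ m : Fin 2, pel e m * t = 0 := by
    intro m
    have hsum : pel e m * t * pel e 0 + pel e m * t * pel e 1 = pel e m * t := by
      rw [← mul_add, pel_sum, mul_one]
    have hcond : ∀ i j : Fin 2, ∀ x ∈ peirceSet e i j,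
        (pel e m * t * pel e 0 + pel e m * t * pel e 1) * g x = 0 := by
      intro i j x hx
      rw [hsum, mul_assoc, key i j x hx, mul_zero]
    obtain ⟨h00, -⟩ := hA1 0 0 m (by decide) _ ⟨t, rfl⟩ _ ⟨t, rfl⟩ (hcond 0 0)
    obtain ⟨-, h11⟩ := hA1 1 1 m (by decide) _ ⟨t, rfl⟩ _ ⟨t, rfl⟩ (hcond 1 1)
    rw [h00 rfl, h11 rfl, add_zero] at hsum
    exact hsum.symm
  have ht0 : t = 0 := by
    calc t = (pel e 0 + pel e 1) * t := by rw [pel_sum, one_mul]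
      _ = 0 := by rw [add_mul, hrow 0, hrow 1, add_zero]
  rw [ht, sub_sub, sub_eq_zero] at ht0
  rw [ht0]

/-- Additivity of `d` on `R_{0l} + R_{1l}` (column lemma). -/
lemma col_add (he : e * e = e) (hg : AssumptionA e g) (hd : IsMultSkewSemiDeriv d g α)
    {l : Fin 2} {a b : R} (ha : a ∈ peirceSet e 0 l) (hb : b ∈ peirceSet e 1 l) :
    d (a + b) = d a + d b := by
  obtain ⟨hg0, _, hA2, _, _⟩ := hg
  have d0 : d 0 = 0 := d_zero hg0 hd
  set t := d (a + b) - d a - d b with ht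
  have key : ∀ i : Fin 2, ∀ x ∈ peirceSet e i i, g x * t = 0 := by
    intro i x hx
    fin_cases i
    · -- i = 0 : x * b = 0
      have hxb : x * b = 0 := mem_mul_zero he (by decide) hx hb
      have hxab : x * (a + b) = x * a := by rw [mul_add, hxb, add_zero]
      have h1 := hd.2.1 x (a + b)
      rw [hxab, hd.2.1 x a, map_add] at h1
      have h3 := hd.2.1 x b
      rw [hxb, d0] at h3
      calc g x * (d (a+b) - d a - d b)
          = (d x * (α a + α b) + g x * d (a+b)) - (d x * α a + g x * d a)
            - (d x * α b + g x * d b) := by noncomm_ring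
        _ = (d x * α a + g x * d a) - (d x * α a + g x * d a) - 0 := by rw [← h1, ← h3]
        _ = 0 := by abel
    · -- i = 1 : x * a = 0
      have hxa : x * a = 0 := mem_mul_zero he (by decide) hx ha
      have hxab : x * (a + b) = x * b := by rw [mul_add, hxa, zero_add]
      have h1 := hd.2.1 x (a + b)
      rw [hxab, hd.2.1 x b, map_add] at h1
      have h3 := hd.2.1 x a
      rw [hxa, d0] at h3
      calc g x * (d (a+b) - d a - d b)
          = (d x * (α a + α b) + g x * d (a+b)) - (d x * α a + g x * d a)
            - (d x * α b + g x * d b) := by noncomm_ring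
        _ = (d x * α b + g x * d b) - 0 - (d x * α b + g x * d b) := by rw [← h1, ← h3]
        _ = 0 := by abel
  have hcol : ∀ m : Fin 2, t * pel e m = 0 := by
    intro m
    have hsum : pel e 0 * t * pel e m + pel e 1 * t * pel e m = t * pel e m := by
      rw [← add_mul, ← add_mul, pel_sum, one_mul]
    have hcond : ∀ i : Fin 2, ∀ x ∈ peirceSet e i i,
        g x * (pel e 0 * t * pel e m + pel e 1 * t * pel e m) = 0 := by
      intro i x hx
      rw [hsum, ← mul_assoc, key i x hx, zero_mul]
    obtain ⟨h00, -⟩ := hA2 0 m _ ⟨t, rfl⟩ _ ⟨t, rfl⟩ (hcond 0)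
    obtain ⟨-, h11⟩ := hA2 1 m _ ⟨t, rfl⟩ _ ⟨t, rfl⟩ (hcond 1)
    rw [h00 rfl, h11 rfl, add_zero] at hsum
    exact hsum.symm
  have ht0 : t = 0 := by
    calc t = t * (pel e 0 + pel e 1) := by rw [pel_sum, mul_one]
      _ = 0 := by rw [mul_add, hcol 0, hcol 1, add_zero]
  rw [ht, sub_sub, sub_eq_zero] at ht0
  rw [ht0]

end helpers

theorem stmt_3 {R : Type*} [Ring R] (e : R) (he : e * e = e) (he0 : e ≠ 0) (he1 : e ≠ 1)
    (g : R → R) (hg : AssumptionA e g) (α : R ≃+* R) (d : R → R)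
    (hd : IsMultSkewSemiDeriv d g α) :
    (∀ a ∈ peirceSet e 0 1, ∀ b ∈ peirceSet e 0 1, d (a + b) = d a + d b) ∧
    (∀ a ∈ peirceSet e 1 0, ∀ b ∈ peirceSet e 1 0, d (a + b) = d a + d b) := by
  have d0 : d 0 = 0 := d_zero hg.1 hd
  have he1m : pel e 0 ∈ peirceSet e 0 0 := pel_mem he 0
  have he2m : pel e 1 ∈ peirceSet e 1 1 := pel_mem he 1
  have hee : pel e 0 * pel e 1 = (0:R) := pel_orth he (by decide)
  have hee' : pel e 1 * pel e 0 = (0:R) := pel_orth he (by decide)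
  constructor
  · -- part (i): a, b ∈ R₁₂
    intro a ha b hb
    have hab : a * b = 0 := mem_mul_zero he (by decide) ha hb
    have hfact : (pel e 0 + a) * (pel e 1 + b) = a + b := by
      rw [mul_add, add_mul, add_mul, hee, mem_left he hb, mem_right he ha,
        mem_mul_zero he (by decide : (1:Fin 2) ≠ 0) ha hb, zero_add, add_zero]
    have h1b : pel e 0 * (pel e 1 + b) = b := by
      rw [mul_add, hee, mem_left he hb, zero_add]
    have hae : (pel e 0 + a) * pel e 1 = a := by
      rw [add_mul, hee, mem_right he ha, zero_add]
    -- substitution facts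
    have hrow : d (pel e 0 + a) = d (pel e 0) + d a := row_add he hg hd he1m ha
    have hcol : d (pel e 1 + b) = d b + d (pel e 1) := by
      rw [add_comm (pel e 1) b]; exact col_add he hg hd hb he2m
    have hg3 : g (pel e 0 + a) = g (pel e 0) + g a := hg.2.2.2.1 _ he1m _ ha
    -- main equations
    have Emain := hd.2.1 (pel e 0 + a) (pel e 1 + b)
    rw [hfact, hrow, hcol, hg3, map_add] at Emain
    have Ea := hd.2.1 (pel e 0 + a) (pel e 1)
    rw [hae, hrow, hg3] at Ea
    have Eb := hd.2.1 (pel e 0) (pel e 1 + b)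
    rw [h1b, hcol, map_add] at Eb
    have Eab := hd.2.1 a b
    rw [hab, d0] at Eab
    have Eee := hd.2.1 (pel e 0) (pel e 1)
    rw [hee, d0] at Eee
    calc d (a + b)
        = (d (pel e 0) + d a) * (α (pel e 1) + α b)
          + (g (pel e 0) + g a) * (d b + d (pel e 1)) := Emain
      _ = ((d (pel e 0) + d a) * α (pel e 1) + (g (pel e 0) + g a) * d (pel e 1))
          + (d (pel e 0) * (α (pel e 1) + α b) + g (pel e 0) * (d b + d (pel e 1)))
          + (d a * α b + g a * d b)
          - (d (pel e 0) * α (pel e 1) + g (pel e 0) * d (pel e 1)) := by noncomm_ring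
      _ = d a + d b + 0 - 0 := by rw [← Ea, ← Eb, ← Eab, ← Eee]
      _ = d a + d b := by abel
  · -- part (ii): a, b ∈ R₂₁
    intro a ha b hb
    have hab : a * b = 0 := mem_mul_zero he (by decide) ha hb
    have hfact : (pel e 1 + a) * (pel e 0 + b) = a + b := by
      rw [mul_add, add_mul, add_mul, hee', mem_left he hb, mem_right he ha,
        mem_mul_zero he (by decide : (0:Fin 2) ≠ 1) ha hb, zero_add, add_zero]
    have h2b : pel e 1 * (pel e 0 + b) = b := by
      rw [mul_add, hee', mem_left he hb, zero_add]
    have hae : (pel e 1 + a) * pel e 0 = a := by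
      rw [add_mul, hee', mem_right he ha, zero_add]
    have hrow : d (pel e 1 + a) = d a + d (pel e 1) := by
      rw [add_comm (pel e 1) a]; exact row_add he hg hd ha he2m
    have hcol : d (pel e 0 + b) = d (pel e 0) + d b := col_add he hg hd he1m hb
    have hg4 : g (pel e 0 + b) = g (pel e 0) + g b := hg.2.2.2.2 _ he1m _ hb
    have Emain := hd.1 (pel e 1 + a) (pel e 0 + b)
    rw [hfact, hrow, hcol, hg4, map_add] at Emain
    have Ea := hd.1 (pel e 1 + a) (pel e 0)
    rw [hae, hrow, map_add] at Ea
    have Eb := hd.1 (pel e 1) (pel e 0 + b)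
    rw [h2b, hcol, hg4] at Eb
    have Eab := hd.1 a b
    rw [hab, d0] at Eab
    have Eee := hd.1 (pel e 1) (pel e 0)
    rw [hee', d0] at Eee
    calc d (a + b)
        = (d a + d (pel e 1)) * (g (pel e 0) + g b)
          + (α (pel e 1) + α a) * (d (pel e 0) + d b) := Emain
      _ = ((d a + d (pel e 1)) * g (pel e 0) + (α (pel e 1) + α a) * d (pel e 0))
          + (d (pel e 1) * (g (pel e 0) + g b) + α (pel e 1) * (d (pel e 0) + d b))
          + (d a * g b + α a * d b)
          - (d (pel e 1) * g (pel e 0) + α (pel e 1) * d (pel e 0)) := by noncomm_ring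
      _ = d a + d b + 0 - 0 := by rw [← Ea, ← Eb, ← Eab, ← Eee]
      _ = d a + d b := by abel
end

section
/- Let R be a ring with identity and a nontrivial idempotent e, let g : R → R satisfy Assumption A, and let f : R → R be a multiplicative generalized skew semi-derivation with associated map g, multiplicative skew semi-derivation d, and automorphism α. Then f is additive on the off-diagonal Peirce components: (i) f(a₁₂ + b₁₂) = f(a₁₂) + f(b₁₂) for all a₁₂, b₁₂ ∈ R₁₂; (ii) f(a₂₁ + b₂₁) = f(a₂₁) + f(b₂₁) for all a₂₁, b₂₁ ∈ R₂₁. -/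
section
variable {R : Type*} [Ring R]

lemma pel_mul_pel {e : R} (he : e * e = e) (i j : Fin 2) :
    pel e i * pel e j = if i = j then pel e i else 0 := by
  fin_cases i <;> fin_cases j <;>
    simp [pel, mul_sub, sub_mul, he, mul_one, one_mul, sub_self, sub_sub_cancel]

lemma pel_add (e : R) : pel e 0 + pel e 1 = 1 := by simp [pel]

lemma memL {e : R} (he : e * e = e) {i j : Fin 2} {x : R} (hx : x ∈ peirceSet e i j) :
    pel e i * x = x := by
  obtain ⟨r, rfl⟩ := hx
  rw [← mul_assoc, ← mul_assoc, pel_mul_pel he, if_pos rfl]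

lemma memR {e : R} (he : e * e = e) {i j : Fin 2} {x : R} (hx : x ∈ peirceSet e i j) :
    x * pel e j = x := by
  obtain ⟨r, rfl⟩ := hx
  rw [mul_assoc, pel_mul_pel he, if_pos rfl]

lemma mem_mul0 {e : R} (he : e * e = e) {i j k l : Fin 2} {x y : R}
    (hx : x ∈ peirceSet e i j) (hy : y ∈ peirceSet e k l) (hjk : j ≠ k) : x * y = 0 := by
  have h1 := memR he hx
  have h2 := memL he hy
  calc x * y = (x * pel e j) * (pel e k * y) := by rw [h1, h2]
    _ = x * ((pel e j * pel e k) * y) := by rw [mul_assoc, ← mul_assoc (pel e j)]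
    _ = 0 := by rw [pel_mul_pel he, if_neg hjk, zero_mul, mul_zero]

lemma mem_mul {e : R} (he : e * e = e) {i j l : Fin 2} {x y : R}
    (hx : x ∈ peirceSet e i j) (hy : y ∈ peirceSet e j l) : x * y ∈ peirceSet e i l := by
  refine ⟨x * y, ?_⟩
  rw [mul_assoc, mul_assoc x, memR he hy, ← mul_assoc, memL he hx]

lemma e_mem {e : R} (he : e * e = e) : e ∈ peirceSet e 0 0 :=
  ⟨1, by simp [pel, he]⟩

end


section
variable {R : Type*} [Ring R] {e : R} {g d f : R → R} {α : R ≃+* R}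

lemma gen_zero (hg0 : g 0 = 0) (hf : IsMultGenSkewSemiDeriv f d g α) : f 0 = 0 := by
  have h := hf.1 0 0
  rw [mul_zero, hg0, mul_zero, map_zero, zero_mul, add_zero] at h
  exact h

lemma d_gen (hd : IsMultSkewSemiDeriv d g α) : IsMultGenSkewSemiDeriv d d g α :=
  ⟨hd.1, hd.2.1, hd.2.2⟩

/-- kill via Assumption A (i): if `t * g y = 0` for all `y ∈ R₁₁ ∪ R₂₂` then `t = 0`. -/
lemma killR (hg : AssumptionA e g) (t : R)
    (h0 : ∀ y ∈ peirceSet e 0 0, t * g y = 0)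
    (h1 : ∀ y ∈ peirceSet e 1 1, t * g y = 0) : t = 0 := by
  have hsum : ∀ k : Fin 2, pel e k * t * pel e 0 + pel e k * t * pel e 1 = pel e k * t := by
    intro k
    rw [mul_assoc, mul_assoc, ← mul_add, ← mul_add, pel_add, mul_one]
  have key0 : ∀ k : Fin 2, pel e k * t * pel e 0 = 0 := by
    intro k
    refine (hg.2.1 0 0 k le_rfl _ ⟨t, rfl⟩ _ ⟨t, rfl⟩ ?_).1 rfl
    intro x hx
    rw [hsum, mul_assoc, h0 x hx, mul_zero]
  have key1 : ∀ k : Fin 2, pel e k * t * pel e 1 = 0 := by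
    intro k
    refine (hg.2.1 1 1 k le_rfl _ ⟨t, rfl⟩ _ ⟨t, rfl⟩ ?_).2 rfl
    intro x hx
    rw [hsum, mul_assoc, h1 x hx, mul_zero]
  have : (pel e 0 + pel e 1) * t * (pel e 0 + pel e 1) = 0 := by
    simp only [add_mul, mul_add, key0, key1, add_zero, zero_add]
  rwa [pel_add, one_mul, mul_one] at this

/-- kill via Assumption A (ii): if `g y * t = 0` for all `y ∈ R₁₁ ∪ R₂₂` then `t = 0`. -/
lemma killL (hg : AssumptionA e g) (t : R)
    (h0 : ∀ y ∈ peirceSet e 0 0, g y * t = 0)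
    (h1 : ∀ y ∈ peirceSet e 1 1, g y * t = 0) : t = 0 := by
  have hsum : ∀ j : Fin 2, pel e 0 * t * pel e j + pel e 1 * t * pel e j = t * pel e j := by
    intro j
    rw [← add_mul, ← add_mul, pel_add, one_mul]
  have key0 : ∀ j : Fin 2, pel e 0 * t * pel e j = 0 := by
    intro j
    refine (hg.2.2.1 0 j _ ⟨t, rfl⟩ _ ⟨t, rfl⟩ ?_).1 rfl
    intro x hx
    rw [hsum, ← mul_assoc, h0 x hx, zero_mul]
  have key1 : ∀ j : Fin 2, pel e 1 * t * pel e j = 0 := by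
    intro j
    refine (hg.2.2.1 1 j _ ⟨t, rfl⟩ _ ⟨t, rfl⟩ ?_).2 rfl
    intro x hx
    rw [hsum, ← mul_assoc, h1 x hx, zero_mul]
  have : (pel e 0 + pel e 1) * t * (pel e 0 + pel e 1) = 0 := by
    simp only [add_mul, mul_add, key0, key1, add_zero, zero_add]
  rwa [pel_add, one_mul, mul_one] at this

lemma keyR (hf : IsMultGenSkewSemiDeriv f d g α) (hf0 : f 0 = 0) {a b y : R}
    (h0 : b * y = 0) (hab : (a + b) * y = a * y) :
    (f (a + b) - (f a + f b)) * g y = 0 := by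
  have h1 := hf.1 (a + b) y
  have h2 := hf.1 a y
  have h3 := hf.1 b y
  rw [hab, map_add] at h1
  rw [h0, hf0] at h3
  have h5 : f (a + b) * g y = f a * g y + α a * d y - (α a + α b) * d y :=
    eq_sub_of_add_eq (h1.symm.trans h2)
  have h6 : f b * g y = -(α b * d y) := eq_neg_of_add_eq_zero_left h3.symm
  rw [sub_mul, add_mul, h5, add_mul, h6]
  abel

lemma keyL (hf : IsMultGenSkewSemiDeriv f d g α) (hf0 : f 0 = 0) {a b y : R}
    (h0 : y * b = 0) (hab : y * (a + b) = y * a) :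
    g y * (f (a + b) - (f a + f b)) = 0 := by
  have h1 := hf.2.1 y (a + b)
  have h2 := hf.2.1 y a
  have h3 := hf.2.1 y b
  rw [hab, map_add] at h1
  rw [h0, hf0] at h3
  have h5 : g y * f (a + b) = d y * α a + g y * f a - d y * (α a + α b) :=
    eq_sub_of_add_eq' (h1.symm.trans h2)
  have h6 : g y * f b = -(d y * α b) := eq_neg_of_add_eq_zero_right h3.symm
  rw [mul_sub, mul_add, h5, mul_add, h6]
  abel

lemma keyR0 (hf : IsMultGenSkewSemiDeriv f d g α) (hf0 : f 0 = 0) {a b y : R}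
    (h : a * y = 0) (h' : b * y = 0) :
    (f (a + b) - (f a + f b)) * g y = 0 := by
  have hab : (a + b) * y = 0 := by rw [add_mul, h, h', add_zero]
  have h1 := hf.1 (a + b) y
  have h2 := hf.1 a y
  have h3 := hf.1 b y
  rw [hab, hf0, map_add] at h1
  rw [h, hf0] at h2
  rw [h', hf0] at h3
  have e1 : f (a + b) * g y = -((α a + α b) * d y) := eq_neg_of_add_eq_zero_left h1.symm
  have e2 : f a * g y = -(α a * d y) := eq_neg_of_add_eq_zero_left h2.symm
  have e3 : f b * g y = -(α b * d y) := eq_neg_of_add_eq_zero_left h3.symm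
  rw [sub_mul, add_mul, e1, e2, e3, add_mul]
  abel

lemma keyL0 (hf : IsMultGenSkewSemiDeriv f d g α) (hf0 : f 0 = 0) {a b y : R}
    (h : y * a = 0) (h' : y * b = 0) :
    g y * (f (a + b) - (f a + f b)) = 0 := by
  have hab : y * (a + b) = 0 := by rw [mul_add, h, h', add_zero]
  have h1 := hf.2.1 y (a + b)
  have h2 := hf.2.1 y a
  have h3 := hf.2.1 y b
  rw [hab, hf0, map_add] at h1
  rw [h, hf0] at h2
  rw [h', hf0] at h3
  have e1 : g y * f (a + b) = -(d y * (α a + α b)) := eq_neg_of_add_eq_zero_right h1.symm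
  have e2 : g y * f a = -(d y * α a) := eq_neg_of_add_eq_zero_right h2.symm
  have e3 : g y * f b = -(d y * α b) := eq_neg_of_add_eq_zero_right h3.symm
  rw [mul_sub, mul_add, e1, e2, e3, mul_add]
  abel

/-- additivity on R₁₁ + R₁₂ -/
lemma addA (he : e * e = e) (hg : AssumptionA e g) (hf : IsMultGenSkewSemiDeriv f d g α) :
    ∀ a ∈ peirceSet e 0 0, ∀ b ∈ peirceSet e 0 1, f (a + b) = f a + f b := by
  intro a ha b hb
  have hf0 : f 0 = 0 := gen_zero hg.1 hf
  rw [← sub_eq_zero]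
  apply killR hg
  · intro y hy
    exact keyR hf hf0 (mem_mul0 he hb hy (by decide))
      (by rw [add_mul, mem_mul0 he hb hy (by decide), add_zero])
  · intro y hy
    have h := keyR hf hf0 (a := b) (b := a) (mem_mul0 he ha hy (by decide))
      (by rw [add_mul, mem_mul0 he ha hy (by decide), add_zero])
    rwa [add_comm b a, add_comm (f b) (f a)] at h

/-- additivity on R₁₁ + R₂₁ -/
lemma addA' (he : e * e = e) (hg : AssumptionA e g) (hf : IsMultGenSkewSemiDeriv f d g α) :
    ∀ a ∈ peirceSet e 0 0, ∀ c ∈ peirceSet e 1 0, f (a + c) = f a + f c := by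
  intro a ha c hc
  have hf0 : f 0 = 0 := gen_zero hg.1 hf
  rw [← sub_eq_zero]
  apply killL hg
  · intro y hy
    exact keyL hf hf0 (mem_mul0 he hy hc (by decide))
      (by rw [mul_add, mem_mul0 he hy hc (by decide), add_zero])
  · intro y hy
    have h := keyL hf hf0 (a := c) (b := a) (mem_mul0 he hy ha (by decide))
      (by rw [mul_add, mem_mul0 he hy ha (by decide), add_zero])
    rwa [add_comm c a, add_comm (f c) (f a)] at h

/-- additivity on R₂₂ + R₁₂ -/
lemma addB (he : e * e = e) (hg : AssumptionA e g) (hf : IsMultGenSkewSemiDeriv f d g α) :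
    ∀ x ∈ peirceSet e 1 1, ∀ b ∈ peirceSet e 0 1, f (x + b) = f x + f b := by
  intro x hx b hb
  have hf0 : f 0 = 0 := gen_zero hg.1 hf
  rw [← sub_eq_zero]
  apply killL hg
  · intro y hy
    have h := keyL hf hf0 (a := b) (b := x) (mem_mul0 he hy hx (by decide))
      (by rw [mul_add, mem_mul0 he hy hx (by decide), add_zero])
    rwa [add_comm b x, add_comm (f b) (f x)] at h
  · intro y hy
    exact keyL hf hf0 (mem_mul0 he hy hb (by decide))
      (by rw [mul_add, mem_mul0 he hy hb (by decide), add_zero])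

/-- additivity on R₂₂ + R₂₁ -/
lemma addB' (he : e * e = e) (hg : AssumptionA e g) (hf : IsMultGenSkewSemiDeriv f d g α) :
    ∀ x ∈ peirceSet e 1 1, ∀ c ∈ peirceSet e 1 0, f (x + c) = f x + f c := by
  intro x hx c hc
  have hf0 : f 0 = 0 := gen_zero hg.1 hf
  rw [← sub_eq_zero]
  apply killR hg
  · intro y hy
    have h := keyR hf hf0 (a := c) (b := x) (mem_mul0 he hx hy (by decide))
      (by rw [add_mul, mem_mul0 he hx hy (by decide), add_zero])
    rwa [add_comm c x, add_comm (f c) (f x)] at h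
  · intro y hy
    exact keyR hf hf0 (mem_mul0 he hc hy (by decide))
      (by rw [add_mul, mem_mul0 he hc hy (by decide), add_zero])

lemma pel_zero (e : R) : pel e 0 = e := by simp [pel]

lemma mart1 (he : e * e = e) (hg : AssumptionA e g)
    (hd : IsMultSkewSemiDeriv d g α) (hf : IsMultGenSkewSemiDeriv f d g α)
    {a b x : R} (ha : a ∈ peirceSet e 0 1) (hb : b ∈ peirceSet e 0 1)
    (hx : x ∈ peirceSet e 1 1) :
    (f (a + b) - (f a + f b)) * g x = 0 := by
  have hf0 : f 0 = 0 := gen_zero hg.1 hf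
  have hbx : b * x ∈ peirceSet e 0 1 := mem_mul he hb hx
  have h1 : e * x = 0 := mem_mul0 he (e_mem he) hx (by decide)
  have h2 : e * (b * x) = b * x := by have := memL he hbx; rwa [pel_zero] at this
  have h3 : a * (b * x) = 0 := mem_mul0 he ha hbx (by decide)
  have Hfac : (a + b) * x = (e + a) * (x + b * x) := by
    rw [add_mul, add_mul, mul_add, mul_add, h1, h2, h3, zero_add, add_zero]
    abel
  have hgea : g (e + a) = g e + g a := hg.2.2.2.1 e (e_mem he) a ha
  have hdea : d (e + a) = d e + d a := addA he hg (d_gen hd) e (e_mem he) a ha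
  have hfxbx : f (x + b * x) = f x + f (b * x) := addB he hg hf x hx (b * x) hbx
  have H1 := hf.1 (a + b) x
  have H2 := hf.2.1 (e + a) (x + b * x)
  rw [← Hfac, hdea, hgea, map_add, hfxbx] at H2
  rw [map_add] at H1
  have step := H1.symm.trans H2
  have Ea : f a * g x + α a * d x = d a * α x + g a * f x :=
    (hf.1 a x).symm.trans (hf.2.1 a x)
  have E3' : f (b * x) = d e * α (b * x) + g e * f (b * x) := by
    have := hf.2.1 e (b * x); rwa [h2] at this
  have Eb : f b * g x + α b * d x = d e * α (b * x) + g e * f (b * x) :=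
    (hf.1 b x).symm.trans E3'
  have E1 : d e * α x + g e * f x = 0 := by
    have := hf.2.1 e x; rw [h1, hf0] at this; exact this.symm
  have E4 : d a * α (b * x) + g a * f (b * x) = 0 := by
    have := hf.2.1 a (b * x); rw [h3, hf0] at this; exact this.symm
  rw [sub_mul, add_mul, eq_sub_of_add_eq step, eq_sub_of_add_eq Ea, eq_sub_of_add_eq Eb]
  simp only [add_mul, mul_add]
  rw [eq_neg_of_add_eq_zero_right E1, eq_neg_of_add_eq_zero_right E4]
  abel

lemma mart2 (he : e * e = e) (hg : AssumptionA e g)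
    (hd : IsMultSkewSemiDeriv d g α) (hf : IsMultGenSkewSemiDeriv f d g α)
    {a b x : R} (ha : a ∈ peirceSet e 1 0) (hb : b ∈ peirceSet e 1 0)
    (hx : x ∈ peirceSet e 1 1) :
    g x * (f (a + b) - (f a + f b)) = 0 := by
  have hf0 : f 0 = 0 := gen_zero hg.1 hf
  have hxa : x * a ∈ peirceSet e 1 0 := mem_mul he hx ha
  have h1 : x * e = 0 := mem_mul0 he hx (e_mem he) (by decide)
  have h2 : (x * a) * e = x * a := by have := memR he hxa; rwa [pel_zero] at this
  have h3 : (x * a) * b = 0 := mem_mul0 he hxa hb (by decide)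
  have Hfac : x * (a + b) = (x + x * a) * (e + b) := by
    rw [mul_add, add_mul, mul_add, mul_add, h1, h2, h3, zero_add, add_zero]
    abel
  have hgeb : g (e + b) = g e + g b := hg.2.2.2.2 e (e_mem he) b hb
  have hdeb : d (e + b) = d e + d b := addA' he hg (d_gen hd) e (e_mem he) b hb
  have hfxxa : f (x + x * a) = f x + f (x * a) := addB' he hg hf x hx (x * a) hxa
  have H1 := hf.2.1 x (a + b)
  have H2 := hf.1 (x + x * a) (e + b)
  rw [← Hfac, hfxxa, hgeb, map_add, hdeb] at H2
  rw [map_add] at H1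
  have step := H1.symm.trans H2
  have R1 : f x * g e + α x * d e = 0 := by
    have := hf.1 x e; rw [h1, hf0] at this; exact this.symm
  have R2 : f x * g b + α x * d b = f (x * b) := (hf.1 x b).symm
  have R3 : f (x * a) * g e + α (x * a) * d e = f (x * a) := by
    have := hf.1 (x * a) e; rw [h2] at this; exact this.symm
  have R4 : f (x * a) * g b + α (x * a) * d b = 0 := by
    have := hf.1 (x * a) b; rw [h3, hf0] at this; exact this.symm
  have L2 : f (x * b) = d x * α b + g x * f b := hf.2.1 x b
  have L3 : f (x * a) = d x * α a + g x * f a := hf.2.1 x a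
  rw [mul_sub, mul_add, eq_sub_of_add_eq' step, eq_sub_of_add_eq' L3.symm,
    eq_sub_of_add_eq' L2.symm]
  simp only [add_mul, mul_add]
  rw [eq_neg_of_add_eq_zero_left R1, eq_neg_of_add_eq_zero_left R4,
    eq_sub_of_add_eq R2, eq_sub_of_add_eq R3]
  abel

end


theorem stmt_16 {R : Type*} [Ring R] (e : R) (he : e * e = e) (he0 : e ≠ 0) (he1 : e ≠ 1)
    (g : R → R) (hg : AssumptionA e g) (α : R ≃+* R) (d f : R → R)
    (hd : IsMultSkewSemiDeriv d g α)
    (hf : IsMultGenSkewSemiDeriv f d g α) :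
    (∀ a ∈ peirceSet e 0 1, ∀ b ∈ peirceSet e 0 1, f (a + b) = f a + f b) ∧
    (∀ a ∈ peirceSet e 1 0, ∀ b ∈ peirceSet e 1 0, f (a + b) = f a + f b) := by
  have hf0 : f 0 = 0 := gen_zero hg.1 hf
  constructor
  · intro a ha b hb
    rw [← sub_eq_zero]
    apply killR hg
    · intro y hy
      exact keyR0 hf hf0 (mem_mul0 he ha hy (by decide)) (mem_mul0 he hb hy (by decide))
    · intro y hy
      exact mart1 he hg hd hf ha hb hy
  · intro a ha b hb
    rw [← sub_eq_zero]
    apply killL hg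
    · intro y hy
      exact keyL0 hf hf0 (mem_mul0 he hy ha (by decide)) (mem_mul0 he hy hb (by decide))
    · intro y hy
      exact mart2 he hg hd hf ha hb hy
end
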